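/- Let T : H₁ → H₂ and S : H₂ → H₃ be closed, densely defined linear operators between Hilbert spaces with Im T ⊆ Ker S, and suppose there is a constant C > 0 such that ‖g‖²_{H₂} ≤ C(‖T*g‖²_{H₁} + ‖Sg‖²_{H₃}) for all g ∈ Dom(S) ∩ Dom(T*). Then for each f ∈ Ker S there is u ∈ H₁ with Tu = f and ‖u‖²_{H₁} ≤ C‖f‖²_{H₂}. -/

import Mathlib

/-!
Let `K = ker S`, a closed subspace containing `range T`. For `g ∈ dom T*` write `g = g₁ + g₂`
with `g₁ ∈ K` and `g₂ ⊥ K`. Then `g₂ ⊥ range T`, so `g₂ ∈ ker T*`; hence `g₁ ∈ dom S ∩ dom T*`,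
`S g₁ = 0` and `T* g₁ = T* g`, and the estimate gives
`|⟪f, g⟫| = |⟪f, g₁⟫| ≤ ‖f‖ ‖g₁‖ ≤ √C ‖f‖ ‖T* g‖`.
Thus `T* g ↦ ⟪f, g⟫` is a well-defined functional on `range T*` of norm at most `√C ‖f‖`;
Hahn–Banach and Riesz give `u` with `‖u‖ ≤ √C ‖f‖` and `⟪u, T* g⟫ = ⟪f, g⟫` for all `g`.
Every `(a, b) ⊥ graph T` has `T* b = -a`, so `(u, f) ∈ (graph T)ᗮᗮ = graph T` as `T` is closed.
-/

open scoped InnerProductSpace LinearPMap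

namespace LinearMap

variable {R M M₂ M₃ : Type*} [Ring R] [AddCommGroup M] [AddCommGroup M₂] [AddCommGroup M₃]
  [Module R M] [Module R M₂] [Module R M₃]

theorem exists_comp_rangeRestrict_eq_of_ker_le (f : M →ₗ[R] M₂) (g : M →ₗ[R] M₃)
    (h : ker f ≤ ker g) : ∃ φ : range f →ₗ[R] M₃, φ ∘ₗ f.rangeRestrict = g := by
  refine ⟨(ker f).liftQ g h ∘ₗ f.quotKerEquivRange.symm.toLinearMap, ?_⟩
  ext v
  have : f.rangeRestrict v = f.quotKerEquivRange (Submodule.Quotient.mk v) :=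
    Subtype.ext (f.quotKerEquivRange_apply_mk v).symm
  simp [this]

end LinearMap

section RieszRepresentation

variable {𝕜 E V : Type*} [RCLike 𝕜] [NormedAddCommGroup E] [InnerProductSpace 𝕜 E]
  [CompleteSpace E] [AddCommGroup V] [Module 𝕜 V]

theorem exists_inner_eq_of_norm_le (A : V →ₗ[𝕜] E) (α : V →ₗ[𝕜] 𝕜) {M : ℝ} (hM : 0 ≤ M)
    (h : ∀ v, ‖α v‖ ≤ M * ‖A v‖) : ∃ u : E, ‖u‖ ≤ M ∧ ∀ v, ⟪u, A v⟫_𝕜 = α v := by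
  have hker : LinearMap.ker A ≤ LinearMap.ker α := fun v hv => by
    simpa [LinearMap.mem_ker.mp hv] using h v
  obtain ⟨φ, hφ⟩ := A.exists_comp_rangeRestrict_eq_of_ker_le α hker
  have hφ_le : ∀ w, ‖φ w‖ ≤ M * ‖w‖ := by
    rintro ⟨_, v, rfl⟩
    have := h v
    rwa [← hφ] at this
  obtain ⟨Φ, hΦ, hΦ_norm⟩ := exists_extension_norm_eq _ (φ.mkContinuous M hφ_le)
  refine ⟨(InnerProductSpace.toDual 𝕜 E).symm Φ, ?_, fun v => ?_⟩
  · rw [LinearIsometryEquiv.norm_map, hΦ_norm]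
    exact φ.mkContinuous_norm_le hM hφ_le
  · rw [InnerProductSpace.toDual_symm_apply, ← hφ]
    exact hΦ (A.rangeRestrict v)

end RieszRepresentation

namespace LinearPMap

section Kernel

variable {R E F : Type*} [CommRing R] [AddCommGroup E] [Module R E] [AddCommGroup F] [Module R F]

def ker (f : E →ₗ.[R] F) : Submodule R E :=
  f.graph.comap (LinearMap.inl R E F)

theorem mem_ker {f : E →ₗ.[R] F} {x : E} : x ∈ f.ker ↔ ∃ hx : x ∈ f.domain, f ⟨x, hx⟩ = 0 := by
  simp only [ker, Submodule.mem_comap, LinearMap.inl_apply, mem_graph_iff]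
  exact ⟨fun ⟨⟨y, hy⟩, hyx, hy0⟩ => hyx ▸ ⟨hy, hy0⟩, fun ⟨hx, hx0⟩ => ⟨⟨x, hx⟩, rfl, hx0⟩⟩

theorem IsClosed.isClosed_ker [TopologicalSpace E] [TopologicalSpace F] [ContinuousAdd E]
    [ContinuousAdd F] [ContinuousConstSMul R E] [ContinuousConstSMul R F] {f : E →ₗ.[R] F}
    (hf : f.IsClosed) : _root_.IsClosed (f.ker : Set E) :=
  hf.preimage (continuous_id.prodMk continuous_const)

end Kernel

variable {𝕜 E F : Type*} [RCLike 𝕜] [NormedAddCommGroup E] [InnerProductSpace 𝕜 E]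
  [NormedAddCommGroup F] [InnerProductSpace 𝕜 F] [CompleteSpace E] {T : E →ₗ.[𝕜] F}

theorem exists_adjoint_apply_eq_zero (hT : Dense (T.domain : Set E)) {g : F}
    (hg : ∀ x : T.domain, ⟪g, T x⟫_𝕜 = 0) : ∃ hg' : g ∈ T†.domain, T† ⟨g, hg'⟩ = 0 := by
  have h : ∀ x : T.domain, ⟪(0 : E), x⟫_𝕜 = ⟪g, T x⟫_𝕜 := fun x => by simp [hg x]
  exact ⟨mem_adjoint_domain_of_exists g ⟨0, h⟩, adjoint_apply_eq hT _ h⟩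

theorem IsClosed.mem_graph_of_forall_inner_adjoint_eq [CompleteSpace F]
    (hT : Dense (T.domain : Set E)) (hT_closed : T.IsClosed) {u : E} {f : F}
    (h : ∀ g : T†.domain, ⟪u, T† g⟫_𝕜 = ⟪f, (g : F)⟫_𝕜) : (u, f) ∈ T.graph := by
  set G := T.graph.comap (WithLp.linearEquiv 2 𝕜 (E × F)).toLinearMap
  have hG : _root_.IsClosed (G : Set (WithLp 2 (E × F))) :=
    hT_closed.preimage (WithLp.prod_continuous_ofLp 2 E F)
  have : CompleteSpace G := hG.completeSpace_coe
  suffices WithLp.toLp 2 (u, f) ∈ Gᗮᗮ by rwa [G.orthogonal_orthogonal] at this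
  refine (Submodule.mem_orthogonal _ _).mpr fun q hq => ?_
  have hq_adj : ∀ x : T.domain, ⟪-q.fst, x⟫_𝕜 = ⟪q.snd, T x⟫_𝕜 := fun x => by
    have := (Submodule.mem_orthogonal' _ _).mp hq (WithLp.toLp 2 (x, T x)) (T.mem_graph x)
    rw [WithLp.prod_inner_apply] at this
    rw [inner_neg_left, neg_eq_iff_eq_neg, ← sub_eq_zero, sub_neg_eq_add]
    simpa using this
  have hq_dom : q.snd ∈ T†.domain := mem_adjoint_domain_of_exists _ ⟨_, hq_adj⟩
  have h_q : -⟪u, q.fst⟫_𝕜 = ⟪f, q.snd⟫_𝕜 := by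
    rw [← inner_neg_right, ← adjoint_apply_eq hT ⟨q.snd, hq_dom⟩ hq_adj]
    exact h ⟨q.snd, hq_dom⟩
  rw [WithLp.prod_inner_apply]
  change ⟪q.fst, u⟫_𝕜 + ⟪q.snd, f⟫_𝕜 = 0
  rw [← inner_conj_symm q.fst, ← inner_conj_symm q.snd, ← h_q, RingHom.map_neg, add_neg_cancel]

theorem IsClosed.exists_apply_eq_of_norm_inner_le [CompleteSpace F]
    (hT : Dense (T.domain : Set E)) (hT_closed : T.IsClosed) {f : F} {M : ℝ} (hM : 0 ≤ M)
    (h : ∀ g : T†.domain, ‖⟪f, (g : F)⟫_𝕜‖ ≤ M * ‖T† g‖) :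
    ∃ u : E, ∃ hu : u ∈ T.domain, T ⟨u, hu⟩ = f ∧ ‖u‖ ≤ M := by
  obtain ⟨u, hu_norm, hu⟩ :=
    exists_inner_eq_of_norm_le T†.toFun ((innerₛₗ 𝕜 f) ∘ₗ T†.domain.subtype) hM h
  obtain ⟨⟨u', hu'⟩, rfl, hTu⟩ := (T.mem_graph_iff).mp
    (hT_closed.mem_graph_of_forall_inner_adjoint_eq hT hu)
  exact ⟨u', hu', hTu, hu_norm⟩

theorem norm_inner_le_mul_norm_adjoint {K : Submodule 𝕜 F} [K.HasOrthogonalProjection]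
    (hT : Dense (T.domain : Set E)) (hTK : ∀ x : T.domain, T x ∈ K) {M : ℝ}
    (hK : ∀ g : T†.domain, (g : F) ∈ K → ‖(g : F)‖ ≤ M * ‖T† g‖) {f : F} (hf : f ∈ K)
    (g : T†.domain) : ‖⟪f, (g : F)⟫_𝕜‖ ≤ M * ‖f‖ * ‖T† g‖ := by
  set g₁ := K.starProjection (g : F)
  obtain ⟨hg₂, hTg₂⟩ := exists_adjoint_apply_eq_zero hT fun x =>
    Submodule.inner_left_of_mem_orthogonal (hTK x) (K.sub_starProjection_mem_orthogonal g)
  have hg₁ : g₁ ∈ T†.domain := by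
    simpa using T†.domain.sub_mem g.2 hg₂
  have hTg₁ : T† ⟨g₁, hg₁⟩ = T† g := by
    have : (⟨g₁, hg₁⟩ : T†.domain) = g - ⟨_, hg₂⟩ := by ext; simp [g₁]
    rw [this, map_sub, hTg₂, sub_zero]
  have hfg : ⟪f, (g : F)⟫_𝕜 = ⟪f, g₁⟫_𝕜 := by
    rw [← sub_eq_zero, ← inner_sub_right]
    exact Submodule.inner_right_of_mem_orthogonal hf (K.sub_starProjection_mem_orthogonal g)
  calc ‖⟪f, (g : F)⟫_𝕜‖ = ‖⟪f, g₁⟫_𝕜‖ := by rw [hfg]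
    _ ≤ ‖f‖ * ‖g₁‖ := norm_inner_le_norm _ _
    _ ≤ ‖f‖ * (M * ‖T† g‖) := by
        gcongr
        simpa [hTg₁] using hK ⟨g₁, hg₁⟩ (K.starProjection_apply_mem _)
    _ = M * ‖f‖ * ‖T† g‖ := by ring

end LinearPMap

theorem hormander_l2_existence_general
    {𝕜 : Type*} [RCLike 𝕜] {H₁ H₂ H₃ : Type*}
    [NormedAddCommGroup H₁] [InnerProductSpace 𝕜 H₁] [CompleteSpace H₁]
    [NormedAddCommGroup H₂] [InnerProductSpace 𝕜 H₂] [CompleteSpace H₂]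
    [NormedAddCommGroup H₃] [InnerProductSpace 𝕜 H₃]
    (T : H₁ →ₗ.[𝕜] H₂) (S : H₂ →ₗ.[𝕜] H₃)
    (hT_closed : T.IsClosed) (hT_dense : Dense (T.domain : Set H₁))
    (hS_closed : S.IsClosed)
    (hTS : ∀ x : T.domain, ∃ h : (T x : H₂) ∈ S.domain, S ⟨T x, h⟩ = 0)
    (C : ℝ) (hC : 0 < C)
    (hest : ∀ (g : H₂) (hg₁ : g ∈ S.domain) (hg₂ : g ∈ T.adjoint.domain),
      ‖g‖ ^ 2 ≤ C * (‖T.adjoint ⟨g, hg₂⟩‖ ^ 2 + ‖S ⟨g, hg₁⟩‖ ^ 2))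
    (f : H₂) (hf : f ∈ S.domain) (hf0 : S ⟨f, hf⟩ = 0) :
    ∃ u : H₁, ∃ hu : u ∈ T.domain, T ⟨u, hu⟩ = f ∧ ‖u‖ ^ 2 ≤ C * ‖f‖ ^ 2 := by
  have : CompleteSpace S.ker := hS_closed.isClosed_ker.completeSpace_coe
  have hTK : ∀ x : T.domain, T x ∈ S.ker := fun x => LinearPMap.mem_ker.mpr (hTS x)
  have hest_ker : ∀ g : T†.domain, (g : H₂) ∈ S.ker → ‖(g : H₂)‖ ≤ √C * ‖T† g‖ := by
    intro g hg
    obtain ⟨hgS, hSg⟩ := LinearPMap.mem_ker.mp hg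
    have hg_sq : ‖(g : H₂)‖ ^ 2 ≤ C * ‖T† g‖ ^ 2 := by
      simpa [hSg] using hest g hgS g.2
    rw [← Real.sqrt_sq (norm_nonneg (T† g)), ← Real.sqrt_mul hC.le]
    exact Real.le_sqrt_of_sq_le hg_sq
  obtain ⟨u, hu, hTu, hu_norm⟩ := hT_closed.exists_apply_eq_of_norm_inner_le hT_dense
    (by positivity) (LinearPMap.norm_inner_le_mul_norm_adjoint hT_dense hTK hest_ker
      (LinearPMap.mem_ker.mpr ⟨hf, hf0⟩))
  refine ⟨u, hu, hTu, ?_⟩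
  calc ‖u‖ ^ 2 ≤ (√C * ‖f‖) ^ 2 := by gcongr
    _ = C * ‖f‖ ^ 2 := by rw [mul_pow, Real.sq_sqrt hC.le]

/-- **Hörmander's `L²`-existence lemma (variant of the Riesz representation
theorem).**
Let `T : H₁ → H₂` and `S : H₂ → H₃` be closed, densely defined linear operators
between Hilbert spaces with `Im T ⊆ Ker S`, and suppose there is a constant
`C > 0` such that `‖g‖²_{H₂} ≤ C(‖T*g‖²_{H₁} + ‖Sg‖²_{H₃})` for all
`g ∈ Dom(S) ∩ Dom(T*)`.  Then for each `f ∈ Ker S` there is `u ∈ H₁` with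
`Tu = f` and `‖u‖²_{H₁} ≤ C‖f‖²_{H₂}`. -/
theorem hormander_l2_existence
    {𝕜 : Type*} [RCLike 𝕜] {H₁ H₂ H₃ : Type*}
    [NormedAddCommGroup H₁] [InnerProductSpace 𝕜 H₁] [CompleteSpace H₁]
    [NormedAddCommGroup H₂] [InnerProductSpace 𝕜 H₂] [CompleteSpace H₂]
    [NormedAddCommGroup H₃] [InnerProductSpace 𝕜 H₃] [CompleteSpace H₃]
    (T : H₁ →ₗ.[𝕜] H₂) (S : H₂ →ₗ.[𝕜] H₃)
    (hT_closed : T.IsClosed) (hT_dense : Dense (T.domain : Set H₁))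
    (hS_closed : S.IsClosed) (hS_dense : Dense (S.domain : Set H₂))
    (hTS : ∀ x : T.domain, ∃ h : (T x : H₂) ∈ S.domain, S ⟨T x, h⟩ = 0)
    (C : ℝ) (hC : 0 < C)
    (hest : ∀ (g : H₂) (hg₁ : g ∈ S.domain) (hg₂ : g ∈ T.adjoint.domain),
      ‖g‖ ^ 2 ≤ C * (‖T.adjoint ⟨g, hg₂⟩‖ ^ 2 + ‖S ⟨g, hg₁⟩‖ ^ 2))
    (f : H₂) (hf : f ∈ S.domain) (hf0 : S ⟨f, hf⟩ = 0) :
    ∃ u : H₁, ∃ hu : u ∈ T.domain, T ⟨u, hu⟩ = f ∧ ‖u‖ ^ 2 ≤ C * ‖f‖ ^ 2 :=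
  hormander_l2_existence_general T S hT_closed hT_dense hS_closed hTS C hC hest f hf hf0
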